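/- arXiv:1202.2782 — 8 statements merged into one kernel-verified Lean document; each statement's English description precedes it below -/
import Mathlib

section
/- For a > b > 0, the functions f_n(φ) = 1/√(a_n² cos²φ + b_n² sin²φ) converge uniformly on [0, π/2] to the constant function 1/μ, where μ = M(a,b) and a_n, b_n are the AGM sequences. -/
/-!
Both `μ` and `√(A n ^ 2 cos² φ + B n ^ 2 sin² φ)` lie in `[B n, A n]`: the first because `B` increases
and `A` decreases to `μ`, the second because the radicand is a convex combination of `A n ^ 2` and
`B n ^ 2`. As both are also `≥ b`, the two reciprocals differ by at most `(A n - B n) / b ^ 2`,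
uniformly in `φ`, and this tends to `0`.
-/

open Real Filter

theorem Filter.Tendsto.tendstoUniformlyOn_of_dist_le {ι α β : Type*} [PseudoMetricSpace β]
    {l : Filter ι} {F : ι → α → β} {f : α → β} {s : Set α} {u : ι → ℝ}
    (hu : Tendsto u l (nhds 0)) (h : ∀ᶠ i in l, ∀ x ∈ s, dist (f x) (F i x) ≤ u i) :
    TendstoUniformlyOn F f l s := by
  rw [Metric.tendstoUniformlyOn_iff]
  intro ε hε
  filter_upwards [h, hu.eventually_lt_const hε] with i hi hui x hx
  exact (hi x hx).trans_lt hui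

theorem Real.dist_one_div_le {c u v : ℝ} (hc : 0 < c) (hu : c ≤ u) (hv : c ≤ v) :
    dist (1 / u) (1 / v) ≤ dist u v / c ^ 2 := by
  have hu0 : 0 < u := hc.trans_le hu
  have hv0 : 0 < v := hc.trans_le hv
  calc dist (1 / u) (1 / v) = dist u v / (u * v) := by
        rw [Real.dist_eq, Real.dist_eq, div_sub_div _ _ hu0.ne' hv0.ne', abs_div,
          abs_of_pos (mul_pos hu0 hv0), abs_sub_comm, one_mul, mul_one]
    _ ≤ dist u v / c ^ 2 := by
        rw [sq]
        gcongr

theorem Real.le_sqrt_mul_of_le {x y : ℝ} (hy : 0 ≤ y) (h : y ≤ x) : y ≤ √(x * y) :=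
  (Real.le_sqrt hy (mul_nonneg (hy.trans h) hy)).2 (by nlinarith)

theorem Real.sqrt_mul_le_add_div_two {x y : ℝ} (hxy : 0 ≤ x + y) : √(x * y) ≤ (x + y) / 2 :=
  Real.sqrt_le_iff.2 ⟨by linarith, by nlinarith [sq_nonneg (x - y)]⟩

theorem Real.sqrt_sq_mul_cos_sq_add_sq_mul_sin_sq_mem_Icc {x y : ℝ} (hy : 0 ≤ y) (h : y ≤ x)
    (φ : ℝ) : √(x ^ 2 * cos φ ^ 2 + y ^ 2 * sin φ ^ 2) ∈ Set.Icc y x := by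
  have hxy : y ^ 2 ≤ x ^ 2 := pow_le_pow_left₀ hy h 2
  have hcs := sin_sq_add_cos_sq φ
  constructor
  · exact (Real.le_sqrt hy (by positivity)).2 (by nlinarith [sq_nonneg (cos φ)])
  · exact Real.sqrt_le_iff.2 ⟨hy.trans h, by nlinarith [sq_nonneg (sin φ)]⟩

section AGM

variable {A B : ℕ → ℝ} (hA : ∀ n, A (n + 1) = (A n + B n) / 2)
  (hB : ∀ n, B (n + 1) = √(A n * B n))
include hA hB

theorem agm_nonneg_and_le (h0 : 0 ≤ B 0) (h : B 0 ≤ A 0) (n : ℕ) : 0 ≤ B n ∧ B n ≤ A n := by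
  induction n with
  | zero => exact ⟨h0, h⟩
  | succ n ih =>
    rw [hA, hB]
    exact ⟨Real.sqrt_nonneg _, Real.sqrt_mul_le_add_div_two (by linarith)⟩

theorem agm_monotone_snd (h0 : 0 ≤ B 0) (h : B 0 ≤ A 0) : Monotone B :=
  monotone_nat_of_le_succ fun n => by
    obtain ⟨hBn, hBA⟩ := agm_nonneg_and_le hA hB h0 h n
    rw [hB]
    exact Real.le_sqrt_mul_of_le hBn hBA

theorem agm_antitone_fst (h0 : 0 ≤ B 0) (h : B 0 ≤ A 0) : Antitone A :=
  antitone_nat_of_succ_le fun n => by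
    have := (agm_nonneg_and_le hA hB h0 h n).2
    rw [hA]
    linarith

theorem agm_limit_mem_Icc (h0 : 0 ≤ B 0) (h : B 0 ≤ A 0) {μ : ℝ}
    (hμA : Tendsto A atTop (nhds μ)) (hμB : Tendsto B atTop (nhds μ)) (n : ℕ) :
    μ ∈ Set.Icc (B n) (A n) :=
  ⟨(agm_monotone_snd hA hB h0 h).ge_of_tendsto hμB n,
    (agm_antitone_fst hA hB h0 h).le_of_tendsto hμA n⟩

end AGM

theorem agm_integrand_tendstoUniformly (a b : ℝ) (hb : 0 < b) (hab : b < a)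
    (A B : ℕ → ℝ) (hA0 : A 0 = a) (hB0 : B 0 = b)
    (hA : ∀ n, A (n + 1) = (A n + B n) / 2)
    (hB : ∀ n, B (n + 1) = Real.sqrt (A n * B n))
    (μ : ℝ) (hμA : Tendsto A atTop (nhds μ)) (hμB : Tendsto B atTop (nhds μ)) :
    TendstoUniformlyOn
      (fun n φ => 1 / Real.sqrt ((A n) ^ 2 * Real.cos φ ^ 2 + (B n) ^ 2 * Real.sin φ ^ 2))
      (fun _ => 1 / μ) atTop (Set.Icc 0 (π / 2)) := by
  have h0 : 0 ≤ B 0 := hB0 ▸ hb.le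
  have hle : B 0 ≤ A 0 := hA0 ▸ hB0 ▸ hab.le
  have hdiff : Tendsto (fun n => (A n - B n) / b ^ 2) atTop (nhds 0) := by
    simpa using (hμA.sub hμB).div_const (b ^ 2)
  refine hdiff.tendstoUniformlyOn_of_dist_le (Eventually.of_forall fun n φ _ => ?_)
  obtain ⟨hBn, hBA⟩ := agm_nonneg_and_le hA hB h0 hle n
  have hbB : b ≤ B n := hB0 ▸ agm_monotone_snd hA hB h0 hle (Nat.zero_le n)
  have hμ := agm_limit_mem_Icc hA hB h0 hle hμA hμB n
  have hI := Real.sqrt_sq_mul_cos_sq_add_sq_mul_sin_sq_mem_Icc hBn hBA φ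
  calc dist (1 / μ) (1 / √(A n ^ 2 * cos φ ^ 2 + B n ^ 2 * sin φ ^ 2))
      ≤ dist μ √(A n ^ 2 * cos φ ^ 2 + B n ^ 2 * sin φ ^ 2) / b ^ 2 :=
        Real.dist_one_div_le hb (hbB.trans hμ.1) (hbB.trans hI.1)
    _ ≤ (A n - B n) / b ^ 2 := by
        gcongr
        exact Real.dist_le_of_mem_Icc hμ hI
end

section
/- Let a > b > 0, a₁ = (a+b)/2, b₁ = √(ab). If sin φ = 2a sin φ' / (a + b + (a − b) sin²φ'), with φ, φ' ∈ [0, π/2], then cos φ = 2 cos φ' √(a₁² cos²φ' + b₁² sin²φ') / (a + b + (a − b) sin²φ'). -/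
/-!
Both sides are nonnegative for angles in `[0, π/2]`, so it suffices to compare squares. Writing
`cos² φ = 1 - sin² φ` and clearing the denominator `D = a + b + (a - b) sin² φ'`, this becomes the
polynomial identity `D² - (2a sin φ')² = (2 cos φ')² (a₁² cos² φ' + a b sin² φ')`, which holds
modulo `sin² φ' + cos² φ' = 1`.
-/

open Real

lemma gauss_denom_sq_sub_sq (a b s c : ℝ) (hsc : s ^ 2 + c ^ 2 = 1) :
    (a + b + (a - b) * s ^ 2) ^ 2 - (2 * a * s) ^ 2 =
      (2 * c) ^ 2 * (((a + b) / 2) ^ 2 * c ^ 2 + a * b * s ^ 2) := by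
  linear_combination (-(a + b) ^ 2 * (c ^ 2 + 1 - s ^ 2) - 4 * a * b * s ^ 2) * hsc

theorem gauss_cos_identity (a b : ℝ) (hb : 0 < b) (hab : b < a)
    (a₁ b₁ : ℝ) (ha₁ : a₁ = (a + b) / 2) (hb₁ : b₁ = Real.sqrt (a * b))
    (φ φ' : ℝ) (hφ : φ ∈ Set.Icc 0 (π / 2)) (hφ' : φ' ∈ Set.Icc 0 (π / 2))
    (h : Real.sin φ = 2 * a * Real.sin φ' / (a + b + (a - b) * Real.sin φ' ^ 2)) :
    Real.cos φ =
      2 * Real.cos φ' * Real.sqrt (a₁ ^ 2 * Real.cos φ' ^ 2 + b₁ ^ 2 * Real.sin φ' ^ 2) /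
        (a + b + (a - b) * Real.sin φ' ^ 2) := by
  have hb₁_sq : b₁ ^ 2 = a * b := by rw [hb₁, sq_sqrt (mul_pos (hb.trans hab) hb).le]
  rw [hb₁_sq, ha₁]
  set s := sin φ'
  set c := cos φ'
  set D := a + b + (a - b) * s ^ 2
  have hD : 0 < D :=
    add_pos_of_pos_of_nonneg (by linarith) (mul_nonneg (by linarith) (sq_nonneg s))
  have hc : 0 ≤ c := cos_nonneg_of_mem_Icc ⟨by linarith [hφ'.1, pi_pos], hφ'.2⟩
  have hcosφ : 0 ≤ cos φ := cos_nonneg_of_mem_Icc ⟨by linarith [hφ.1, pi_pos], hφ.2⟩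
  have hQ : 0 ≤ ((a + b) / 2) ^ 2 * c ^ 2 + a * b * s ^ 2 := by
    have := mul_pos (hb.trans hab) hb
    positivity
  refine (sq_eq_sq₀ hcosφ (by positivity)).1 ?_
  calc cos φ ^ 2 = (D ^ 2 - (2 * a * s) ^ 2) / D ^ 2 := by
        rw [cos_sq', h]; field_simp
    _ = _ := by
        rw [gauss_denom_sq_sub_sq a b s c (sin_sq_add_cos_sq φ'), div_pow (2 * c * _),
          mul_pow _ (√_), sq_sqrt hQ]
end

section
/- Let a > b > 0, a₁ = (a+b)/2, b₁ = √(ab). If sin φ = 2a sin φ' / (a + b + (a − b) sin²φ') with φ, φ' ∈ [0, π/2], then √(a² cos²φ + b² sin²φ) = a · ((a + b) − (a − b) sin²φ') / ((a + b) + (a − b) sin²φ'). -/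
/-! The substitution is rational in `s = sin φ'`: with `D = a + b + (a - b) s²` and
`N = a + b - (a - b) s²` one has `D² - N² = 4 (a² - b²) s²`, which makes
`a² cos² φ + b² sin² φ = a² - (a² - b²) sin² φ` the perfect square `(a N / D)²`.
Since `N ≥ 2b > 0` and `D > 0`, the square root is `a N / D`. -/

open Real

namespace Landen

lemma denom_pos {a b : ℝ} (hb : 0 < b) (hab : b ≤ a) (s : ℝ) :
    0 < a + b + (a - b) * s ^ 2 := by
  nlinarith [sq_nonneg s]

lemma numer_pos {a b s : ℝ} (hb : 0 < b) (hab : b ≤ a) (hs : s ^ 2 ≤ 1) :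
    0 < a + b - (a - b) * s ^ 2 := by
  nlinarith

lemma sq_mul_one_sub_sq_add_sq_mul_sq (a b s : ℝ) (hD : a + b + (a - b) * s ^ 2 ≠ 0) :
    a ^ 2 * (1 - (2 * a * s / (a + b + (a - b) * s ^ 2)) ^ 2)
        + b ^ 2 * (2 * a * s / (a + b + (a - b) * s ^ 2)) ^ 2 =
      (a * (a + b - (a - b) * s ^ 2) / (a + b + (a - b) * s ^ 2)) ^ 2 := by
  generalize hDdef : a + b + (a - b) * s ^ 2 = D at hD ⊢
  field_simp
  rw [← hDdef]
  ring

end Landen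

theorem gauss_sqrt_identity_general (a b : ℝ) (hb : 0 < b) (hab : b < a)
    (φ φ' : ℝ)
    (h : Real.sin φ = 2 * a * Real.sin φ' / (a + b + (a - b) * Real.sin φ' ^ 2)) :
    Real.sqrt (a ^ 2 * Real.cos φ ^ 2 + b ^ 2 * Real.sin φ ^ 2) =
      a * ((a + b) - (a - b) * Real.sin φ' ^ 2) / ((a + b) + (a - b) * Real.sin φ' ^ 2) := by
  have hD := Landen.denom_pos hb hab.le (sin φ')
  have hN := Landen.numer_pos hb hab.le (sin_sq_le_one φ')
  rw [cos_sq', h, Landen.sq_mul_one_sub_sq_add_sq_mul_sq a b _ hD.ne',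
    sqrt_sq (div_nonneg (mul_nonneg (hb.trans hab).le hN.le) hD.le)]

theorem gauss_sqrt_identity (a b : ℝ) (hb : 0 < b) (hab : b < a)
    (a₁ b₁ : ℝ) (ha₁ : a₁ = (a + b) / 2) (hb₁ : b₁ = Real.sqrt (a * b))
    (φ φ' : ℝ) (hφ : φ ∈ Set.Icc 0 (π / 2)) (hφ' : φ' ∈ Set.Icc 0 (π / 2))
    (h : Real.sin φ = 2 * a * Real.sin φ' / (a + b + (a - b) * Real.sin φ' ^ 2)) :
    Real.sqrt (a ^ 2 * Real.cos φ ^ 2 + b ^ 2 * Real.sin φ ^ 2) =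
      a * ((a + b) - (a - b) * Real.sin φ' ^ 2) / ((a + b) + (a - b) * Real.sin φ' ^ 2) :=
  gauss_sqrt_identity_general a b hb hab φ φ' h
end

section
/- For a > b > 0, the elliptic integral I(a,b) = ∫₀^{π/2} dφ / √(a² cos²φ + b² sin²φ) satisfies I(a,b) = I((a+b)/2, √(ab)). -/
/-!
With `t = b tan φ` the integral becomes `∫₀^∞ dt / √((t² + a²)(t² + b²))`. Gauss's substitution
`u = (t - ab/t)/2` maps `(0, ∞)` bijectively onto `ℝ` and carries the kernel of `((a+b)/2, √(ab))`
to twice the kernel of `(a, b)`; as the kernel is even, its integral over `ℝ` is twice its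
integral over `(0, ∞)`, and the factors of `2` cancel.
-/

open Real Set MeasureTheory

noncomputable def ellipticKernel (a b t : ℝ) : ℝ := 1 / √((t ^ 2 + a ^ 2) * (t ^ 2 + b ^ 2))

theorem abs_div_cos_sq_mul_ellipticKernel_mul_tan {a b φ : ℝ} (hb : b ≠ 0) (hφ : cos φ ≠ 0) :
    |b / cos φ ^ 2| * ellipticKernel a b (b * tan φ) =
      1 / √(a ^ 2 * cos φ ^ 2 + b ^ 2 * sin φ ^ 2) := by
  have hfactor : ((b * tan φ) ^ 2 + a ^ 2) * ((b * tan φ) ^ 2 + b ^ 2) =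
      (a ^ 2 * cos φ ^ 2 + b ^ 2 * sin φ ^ 2) * (b / cos φ ^ 2) ^ 2 := by
    rw [tan_eq_sin_div_cos]
    field_simp
    linear_combination (b ^ 2 * sin φ ^ 2 + a ^ 2 * cos φ ^ 2) * sin_sq_add_cos_sq φ
  rw [ellipticKernel, hfactor, sqrt_mul' _ (sq_nonneg _), sqrt_sq_eq_abs]
  have : |b / cos φ ^ 2| ≠ 0 := by positivity
  field_simp

theorem image_mul_tan_Ioo {b : ℝ} (hb : 0 < b) :
    (fun φ => b * tan φ) '' Ioo 0 (π / 2) = Ioi 0 := by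
  ext t
  constructor
  · rintro ⟨φ, ⟨hφ₀, hφ₁⟩, rfl⟩
    exact mul_pos hb (tan_pos_of_pos_of_lt_pi_div_two hφ₀ hφ₁)
  · intro ht
    refine ⟨arctan (t / b), ⟨arctan_pos.2 (div_pos ht hb), arctan_lt_pi_div_two _⟩, ?_⟩
    simp only [tan_arctan]
    field_simp

theorem integral_inv_sqrt_eq_integral_Ioi_ellipticKernel (a : ℝ) {b : ℝ} (hb : 0 < b) :
    ∫ φ in (0:ℝ)..(π / 2), 1 / √(a ^ 2 * cos φ ^ 2 + b ^ 2 * sin φ ^ 2) =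
      ∫ t in Ioi 0, ellipticKernel a b t := by
  have hsub : Ioo 0 (π / 2) ⊆ Ioo (-(π / 2)) (π / 2) :=
    Ioo_subset_Ioo_left (by linarith [pi_pos])
  have hcos : ∀ φ ∈ Ioo 0 (π / 2), cos φ ≠ 0 := fun φ hφ => (cos_pos_of_mem_Ioo (hsub hφ)).ne'
  have hderiv : ∀ φ ∈ Ioo 0 (π / 2),
      HasDerivWithinAt (fun φ => b * tan φ) (b / cos φ ^ 2) (Ioo 0 (π / 2)) φ := fun φ hφ => by
    simpa [div_eq_mul_inv] using ((hasDerivAt_tan (hcos φ hφ)).const_mul b).hasDerivWithinAt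
  have hinj : InjOn (fun φ => b * tan φ) (Ioo 0 (π / 2)) := fun x hx y hy hxy =>
    injOn_tan (hsub hx) (hsub hy) (mul_left_cancel₀ hb.ne' hxy)
  rw [← image_mul_tan_Ioo hb,
    integral_image_eq_integral_abs_deriv_smul measurableSet_Ioo hderiv hinj,
    intervalIntegral.integral_of_le (by positivity), integral_Ioc_eq_integral_Ioo]
  refine setIntegral_congr_fun measurableSet_Ioo fun φ hφ => ?_
  rw [smul_eq_mul, abs_div_cos_sq_mul_ellipticKernel_mul_tan hb.ne' (hcos φ hφ)]

theorem integral_ellipticKernel_eq_two_mul_integral_Ioi (a b : ℝ) :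
    ∫ t, ellipticKernel a b t = 2 * ∫ t in Ioi 0, ellipticKernel a b t := by
  simpa only [ellipticKernel, sq_abs] using integral_comp_abs (f := ellipticKernel a b)

theorem abs_deriv_mul_ellipticKernel_agm {a b t : ℝ} (hab : 0 ≤ a * b) (ht : t ≠ 0) :
    |(1 + a * b / t ^ 2) / 2| * ellipticKernel ((a + b) / 2) √(a * b) ((t - a * b / t) / 2) =
      2 * ellipticKernel a b t := by
  have hfactor : (((t - a * b / t) / 2) ^ 2 + ((a + b) / 2) ^ 2) *
      (((t - a * b / t) / 2) ^ 2 + √(a * b) ^ 2) =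
      ((t ^ 2 + a ^ 2) * (t ^ 2 + b ^ 2)) * ((1 + a * b / t ^ 2) / 4) ^ 2 := by
    rw [sq_sqrt hab]
    field_simp
    ring
  have hq : (1 + a * b / t ^ 2) / 4 ≠ 0 := by positivity
  rw [ellipticKernel, ellipticKernel, hfactor, sqrt_mul' _ (sq_nonneg _), sqrt_sq_eq_abs,
    show (1 + a * b / t ^ 2) / 2 = 2 * ((1 + a * b / t ^ 2) / 4) by ring, abs_mul, abs_two]
  have : |(1 + a * b / t ^ 2) / 4| ≠ 0 := abs_ne_zero.2 hq
  field_simp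

theorem image_agm_subst_Ioi {a b : ℝ} (hab : 0 < a * b) :
    (fun t => (t - a * b / t) / 2) '' Ioi 0 = univ := by
  refine eq_univ_of_forall fun u => ?_
  set r := √(u ^ 2 + a * b)
  have hr : r ^ 2 = u ^ 2 + a * b := sq_sqrt (by positivity)
  have hur : |u| < r := by
    rw [← sqrt_sq_eq_abs]
    exact sqrt_lt_sqrt (sq_nonneg u) (by linarith)
  have hpos : 0 < u + r := by linarith [neg_abs_le u]
  have hdiv : a * b / (u + r) = r - u := by
    rw [div_eq_iff hpos.ne']
    linear_combination -hr
  exact ⟨u + r, hpos, by simp only [hdiv]; ring⟩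

theorem injOn_agm_subst {a b : ℝ} (hab : 0 ≤ a * b) :
    InjOn (fun t => (t - a * b / t) / 2) (Ioi 0) := by
  intro s (hs : 0 < s) t (ht : 0 < t) hst
  simp only at hst
  field_simp at hst
  nlinarith [mul_pos hs ht]

theorem hasDerivAt_agm_subst (a b : ℝ) {t : ℝ} (ht : t ≠ 0) :
    HasDerivAt (fun t => (t - a * b / t) / 2) ((1 + a * b / t ^ 2) / 2) t := by
  have hsub := (hasDerivAt_id' t).sub ((hasDerivAt_inv ht).const_mul (a * b))
  exact (hsub.div_const 2).congr_deriv (by ring)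

theorem integral_ellipticKernel_agm {a b : ℝ} (hab : 0 < a * b) :
    ∫ u, ellipticKernel ((a + b) / 2) √(a * b) u = 2 * ∫ t in Ioi 0, ellipticKernel a b t := by
  rw [← setIntegral_univ, ← image_agm_subst_Ioi hab,
    integral_image_eq_integral_abs_deriv_smul measurableSet_Ioi
      (fun t ht => (hasDerivAt_agm_subst a b (ne_of_gt ht)).hasDerivWithinAt)
      (injOn_agm_subst hab.le),
    ← integral_const_mul]
  refine setIntegral_congr_fun measurableSet_Ioi fun t ht => ?_
  rw [smul_eq_mul, abs_deriv_mul_ellipticKernel_agm hab.le (ne_of_gt ht)]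

theorem elliptic_integral_agm_invariant (a b : ℝ) (hb : 0 < b) (hab : b < a) :
    (∫ φ in (0:ℝ)..(π / 2), 1 / Real.sqrt (a ^ 2 * Real.cos φ ^ 2 + b ^ 2 * Real.sin φ ^ 2)) =
    ∫ φ in (0:ℝ)..(π / 2),
      1 / Real.sqrt (((a + b) / 2) ^ 2 * Real.cos φ ^ 2 + Real.sqrt (a * b) ^ 2 * Real.sin φ ^ 2) := by
  have hab_pos : 0 < a * b := mul_pos (hb.trans hab) hb
  have hagm := integral_ellipticKernel_agm hab_pos
  rw [integral_ellipticKernel_eq_two_mul_integral_Ioi] at hagm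
  rw [integral_inv_sqrt_eq_integral_Ioi_ellipticKernel a hb,
    integral_inv_sqrt_eq_integral_Ioi_ellipticKernel _ (sqrt_pos.2 hab_pos)]
  linarith
end

section
/- For 0 < α ≤ π/2, the complete elliptic integral K with k = sin(α/2) satisfies (α/2)/sin(α/2) ≤ (2/π)·K(sin(α/2)) ≤ √(α/sin α). -/
/-!
Write `f(φ) = 1 / √(1 - k² sin² φ)`, which increases on `[0, π/2]`.

Lower bound: the weight `1 - (π/2) cos φ` has mean zero on `[0, π/2]` and changes sign once,
from negative to positive, so `∫ (1 - (π/2) cos φ) f(φ) dφ ≥ 0`; and `∫ cos φ f(φ) dφ = arcsin k / k`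
since `arcsin (k sin φ)` is an antiderivative of `k cos φ f(φ)`. With `k = sin (α/2)` this reads
`(π/2) (α/2) / sin (α/2) ≤ K`.

Upper bound: Cauchy–Schwarz gives `K² ≤ (π/2) ∫ f² = (π/2)² / √(1 - k²)`, and for `k = sin (α/2)`
`1 / cos (α/2) ≤ (α/2) / (sin (α/2) cos (α/2)) = α / sin α`.
-/

open Real

noncomputable def ellipticK (k : ℝ) : ℝ :=
  ∫ φ in (0:ℝ)..(π / 2), 1 / Real.sqrt (1 - k ^ 2 * Real.sin φ ^ 2)

open Set intervalIntegral
open MeasureTheory (volume)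

theorem sq_integral_le_mul_integral_sq {f : ℝ → ℝ} {a b : ℝ} (hab : a ≤ b)
    (hf : IntervalIntegrable f volume a b)
    (hf2 : IntervalIntegrable (fun x => f x ^ 2) volume a b) :
    (∫ x in a..b, f x) ^ 2 ≤ (b - a) * ∫ x in a..b, f x ^ 2 := by
  have hquad (t : ℝ) :
      0 ≤ (b - a) * (t * t) + (-2 * ∫ x in a..b, f x) * t + ∫ x in a..b, f x ^ 2 := by
    have hexpand : ∫ x in a..b, (f x - t) ^ 2
        = (b - a) * (t * t) + (-2 * ∫ x in a..b, f x) * t + ∫ x in a..b, f x ^ 2 := by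
      have : (fun x => (f x - t) ^ 2) = fun x => f x ^ 2 - 2 * t * f x + t ^ 2 := by
        funext x; ring
      rw [this, integral_add (hf2.sub (hf.const_mul _)) intervalIntegrable_const,
        integral_sub hf2 (hf.const_mul _), integral_const_mul, integral_const, smul_eq_mul]
      ring
    rw [← hexpand]
    exact integral_nonneg hab fun x _ => sq_nonneg _
  have := discrim_le_zero hquad
  rw [discrim] at this
  linarith

theorem integral_mul_nonneg_of_sign_change {f g : ℝ → ℝ} {a b c : ℝ} (hab : a ≤ b)
    (hf : MonotoneOn f (Icc a b)) (hc : c ∈ Icc a b)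
    (hg_neg : ∀ x ∈ Icc a c, g x ≤ 0) (hg_pos : ∀ x ∈ Icc c b, 0 ≤ g x)
    (hg : IntervalIntegrable g volume a b)
    (hgf : IntervalIntegrable (fun x => g x * f x) volume a b)
    (hg0 : ∫ x in a..b, g x = 0) : 0 ≤ ∫ x in a..b, g x * f x := by
  have hshift : ∫ x in a..b, g x * f x = ∫ x in a..b, (g x * f x - f c * g x) := by
    rw [integral_sub hgf (hg.const_mul _), integral_const_mul, hg0, mul_zero, sub_zero]
  rw [hshift]
  -- `g x * (f x - f c) ≥ 0`: both factors change sign at `c`.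
  refine integral_nonneg hab fun x hx => ?_
  rcases le_total x c with hxc | hcx
  · nlinarith [hf hx hc hxc, hg_neg x ⟨hx.1, hxc⟩]
  · nlinarith [hf hc hx hcx, hg_pos x ⟨hcx, hx.2⟩]

theorem cos_sq_add_mul_sin_sq_pos {c : ℝ} (hc : 0 < c) (φ : ℝ) :
    0 < cos φ ^ 2 + c * sin φ ^ 2 := by
  nlinarith [sin_sq_add_cos_sq φ, sq_nonneg (cos φ), mul_nonneg hc.le (sq_nonneg (sin φ))]

/-- This is `arctan (c tan x)`, rewritten with the subtraction formula for `arctan` as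
`x + arctan ((c - 1) tan x / (1 + c tan² x))` so that it is smooth across `π / 2`. -/
theorem hasDerivAt_add_arctan {c : ℝ} (hc : 0 < c) (φ : ℝ) :
    HasDerivAt (fun x => x + arctan ((c - 1) * (sin x * cos x) / (cos x ^ 2 + c * sin x ^ 2)))
      (c / (cos φ ^ 2 + c ^ 2 * sin φ ^ 2)) φ := by
  have hV := cos_sq_add_mul_sin_sq_pos hc φ
  have hquot := ((((hasDerivAt_sin φ).fun_mul (hasDerivAt_cos φ)).const_mul (c - 1)).fun_div
    (((hasDerivAt_cos φ).fun_pow 2).fun_add (((hasDerivAt_sin φ).fun_pow 2).const_mul c)) hV.ne')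
  have hW := cos_sq_add_mul_sin_sq_pos (pow_pos hc 2) φ
  refine ((hasDerivAt_id' φ).fun_add hquot.arctan).congr_deriv ?_
  push_cast
  field_simp
  linear_combination c * (cos φ ^ 2 + c ^ 2 * sin φ ^ 2) * (sin φ ^ 2 + cos φ ^ 2) *
    sin_sq_add_cos_sq φ

theorem integral_inv_cos_sq_add_sq_mul_sin_sq {c : ℝ} (hc : 0 < c) :
    ∫ φ in (0 : ℝ)..π / 2, (cos φ ^ 2 + c ^ 2 * sin φ ^ 2)⁻¹ = π / (2 * c) := by
  have hW := cos_sq_add_mul_sin_sq_pos (pow_pos hc 2)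
  have hint : ∫ φ in (0 : ℝ)..π / 2, c / (cos φ ^ 2 + c ^ 2 * sin φ ^ 2) = π / 2 := by
    rw [integral_eq_sub_of_hasDerivAt (fun φ _ => hasDerivAt_add_arctan hc φ)
      ((continuous_const.div (by fun_prop) fun φ => (hW φ).ne').intervalIntegrable _ _)]
    simp
  calc ∫ φ in (0 : ℝ)..π / 2, (cos φ ^ 2 + c ^ 2 * sin φ ^ 2)⁻¹
      = c⁻¹ * ∫ φ in (0 : ℝ)..π / 2, c / (cos φ ^ 2 + c ^ 2 * sin φ ^ 2) := by
        rw [← integral_const_mul]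
        congr 1 with φ
        field_simp
    _ = π / (2 * c) := by
        rw [hint]
        field_simp

noncomputable def ellipticKIntegrand (k φ : ℝ) : ℝ := 1 / √(1 - k ^ 2 * sin φ ^ 2)

theorem ellipticK_eq_integral (k : ℝ) :
    ellipticK k = ∫ φ in (0 : ℝ)..π / 2, ellipticKIntegrand k φ := rfl

section

variable {k : ℝ}

theorem one_sub_sq_mul_sin_sq_pos (hk : k ^ 2 < 1) (φ : ℝ) : 0 < 1 - k ^ 2 * sin φ ^ 2 := by
  nlinarith [sin_sq_le_one φ, sq_nonneg k]

theorem continuous_ellipticKIntegrand (hk : k ^ 2 < 1) : Continuous (ellipticKIntegrand k) :=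
  continuous_const.div (by fun_prop) fun φ => (sqrt_pos.2 (one_sub_sq_mul_sin_sq_pos hk φ)).ne'

theorem monotoneOn_ellipticKIntegrand (hk : k ^ 2 < 1) :
    MonotoneOn (ellipticKIntegrand k) (Icc 0 (π / 2)) := by
  intro x hx y hy hxy
  have hsin : sin x ^ 2 ≤ sin y ^ 2 :=
    pow_le_pow_left₀ (sin_nonneg_of_nonneg_of_le_pi hx.1 (by linarith [hx.2, pi_pos]))
      (sin_le_sin_of_le_of_le_pi_div_two (by linarith [hx.1, pi_pos]) hy.2 hxy) 2
  refine one_div_le_one_div_of_le (sqrt_pos.2 (one_sub_sq_mul_sin_sq_pos hk y)) (sqrt_le_sqrt ?_)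
  nlinarith [sq_nonneg k]

theorem ellipticKIntegrand_sq (hk : k ^ 2 < 1) (φ : ℝ) :
    ellipticKIntegrand k φ ^ 2 = (cos φ ^ 2 + √(1 - k ^ 2) ^ 2 * sin φ ^ 2)⁻¹ := by
  rw [ellipticKIntegrand, div_pow, one_pow, sq_sqrt (one_sub_sq_mul_sin_sq_pos hk φ).le,
    sq_sqrt (by nlinarith [sq_nonneg k]), one_div]
  congr 1
  linear_combination -sin_sq_add_cos_sq φ

theorem integral_cos_mul_ellipticKIntegrand (hk0 : k ≠ 0) (hk : k ^ 2 < 1) :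
    ∫ φ in (0 : ℝ)..π / 2, cos φ * ellipticKIntegrand k φ = arcsin k / k := by
  have hderiv (φ : ℝ) :
      HasDerivAt (fun x => arcsin (k * sin x) / k) (cos φ * ellipticKIntegrand k φ) φ := by
    have hks : |k * sin φ| < 1 := by
      rw [← sq_lt_one_iff_abs_lt_one]
      nlinarith [one_sub_sq_mul_sin_sq_pos hk φ]
    refine (((hasDerivAt_arcsin (abs_lt.1 hks).1.ne' (abs_lt.1 hks).2.ne).comp φ
      ((hasDerivAt_sin φ).const_mul k)).div_const k).congr_deriv ?_
    rw [ellipticKIntegrand, mul_pow]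
    field_simp
  rw [integral_eq_sub_of_hasDerivAt (fun φ _ => hderiv φ)
    ((continuous_cos.mul (continuous_ellipticKIntegrand hk)).intervalIntegrable _ _)]
  simp

theorem pi_div_two_mul_arcsin_div_le_ellipticK (hk0 : k ≠ 0) (hk : k ^ 2 < 1) :
    π / 2 * (arcsin k / k) ≤ ellipticK k := by
  have hπ : 2 < π := by linarith [pi_gt_three]
  set c := arccos (2 / π)
  have hc : c ∈ Icc 0 (π / 2) :=
    ⟨arccos_nonneg _, arccos_le_pi_div_two.2 (div_pos two_pos pi_pos).le⟩
  have hcos : cos c = 2 / π :=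
    cos_arccos (by linarith [div_pos two_pos pi_pos]) ((div_le_one pi_pos).2 hπ.le)
  have hg_neg : ∀ φ ∈ Icc 0 c, 1 - π / 2 * cos φ ≤ 0 := fun φ hφ => by
    have := cos_le_cos_of_nonneg_of_le_pi hφ.1 (by linarith [hc.2]) hφ.2
    rw [hcos, div_le_iff₀ pi_pos] at this
    linarith
  have hg_pos : ∀ φ ∈ Icc c (π / 2), 0 ≤ 1 - π / 2 * cos φ := fun φ hφ => by
    have := cos_le_cos_of_nonneg_of_le_pi hc.1 (by linarith [hφ.2]) hφ.1
    rw [hcos, le_div_iff₀ pi_pos] at this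
    linarith
  have hg0 : ∫ φ in (0 : ℝ)..π / 2, (1 - π / 2 * cos φ) = 0 := by simp
  have hf := continuous_ellipticKIntegrand hk
  have hg : Continuous fun φ => 1 - π / 2 * cos φ := by fun_prop
  have hsign : 0 ≤ ∫ φ in (0 : ℝ)..π / 2, (1 - π / 2 * cos φ) * ellipticKIntegrand k φ :=
    integral_mul_nonneg_of_sign_change pi_div_two_pos.le (monotoneOn_ellipticKIntegrand hk) hc
      hg_neg hg_pos (hg.intervalIntegrable _ _) ((hg.mul hf).intervalIntegrable _ _) hg0
  have hsplit : ∫ φ in (0 : ℝ)..π / 2, (1 - π / 2 * cos φ) * ellipticKIntegrand k φ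
      = ellipticK k - π / 2 * ∫ φ in (0 : ℝ)..π / 2, cos φ * ellipticKIntegrand k φ := by
    have hcf : Continuous fun φ => π / 2 * (cos φ * ellipticKIntegrand k φ) := by fun_prop
    simp only [sub_mul, one_mul, mul_assoc]
    rw [integral_sub (hf.intervalIntegrable _ _) (hcf.intervalIntegrable _ _),
      integral_const_mul, ellipticK_eq_integral]
  rw [hsplit, integral_cos_mul_ellipticKIntegrand hk0 hk] at hsign
  linarith

theorem ellipticK_sq_le (hk : k ^ 2 < 1) : ellipticK k ^ 2 ≤ (π / 2) ^ 2 / √(1 - k ^ 2) := by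
  have hc : 0 < √(1 - k ^ 2) := sqrt_pos.2 (by linarith)
  have hf := continuous_ellipticKIntegrand hk
  calc ellipticK k ^ 2 ≤ (π / 2 - 0) * ∫ φ in (0 : ℝ)..π / 2, ellipticKIntegrand k φ ^ 2 :=
        sq_integral_le_mul_integral_sq pi_div_two_pos.le (hf.intervalIntegrable _ _)
          ((hf.pow 2).intervalIntegrable _ _)
    _ = (π / 2) ^ 2 / √(1 - k ^ 2) := by
        simp_rw [ellipticKIntegrand_sq hk, integral_inv_cos_sq_add_sq_mul_sin_sq hc]
        field_simp
        ring

end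

theorem one_div_cos_le_two_mul_div_sin_two_mul {a : ℝ} (ha0 : 0 < a) (ha : a < π / 2) :
    1 / cos a ≤ 2 * a / sin (2 * a) := by
  have hsin : 0 < sin a := sin_pos_of_pos_of_lt_pi ha0 (by linarith [pi_pos])
  have hcos : 0 < cos a := cos_pos_of_mem_Ioo ⟨by linarith, ha⟩
  rw [sin_two_mul, div_le_div_iff₀ hcos (by positivity)]
  nlinarith [sin_le ha0.le]

theorem pars_thurston_bounds (α : ℝ) (hα0 : 0 < α) (hα : α ≤ π / 2) :
    (α / 2) / Real.sin (α / 2) ≤ (2 / π) * ellipticK (Real.sin (α / 2)) ∧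
    (2 / π) * ellipticK (Real.sin (α / 2)) ≤ Real.sqrt (α / Real.sin α) := by
  set a := α / 2 with ha
  have ha0 : 0 < a := by positivity
  have haπ : a < π / 2 := by linarith [pi_pos]
  have hsin : 0 < sin a := sin_pos_of_pos_of_lt_pi ha0 (by linarith)
  have hcos : 0 < cos a := cos_pos_of_mem_Ioo ⟨by linarith, haπ⟩
  have hk : sin a ^ 2 < 1 := by nlinarith [sin_sq_add_cos_sq a]
  constructor
  · have hlower := pi_div_two_mul_arcsin_div_le_ellipticK hsin.ne' hk
    rw [arcsin_sin (by linarith) haπ.le] at hlower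
    calc a / sin a = 2 / π * (π / 2 * (a / sin a)) := by field_simp
      _ ≤ 2 / π * ellipticK (sin a) := by gcongr
  · have hupper := ellipticK_sq_le hk
    rw [← cos_sq', sqrt_sq hcos.le] at hupper
    refine le_sqrt_of_sq_le ?_
    calc (2 / π * ellipticK (sin a)) ^ 2 ≤ (2 / π) ^ 2 * ((π / 2) ^ 2 / cos a) := by
          rw [mul_pow]; gcongr
      _ = 1 / cos a := by field_simp
      _ ≤ 2 * a / sin (2 * a) := one_div_cos_le_two_mul_div_sin_two_mul ha0 haπ
      _ = α / sin α := by rw [ha, mul_div_cancel₀ _ two_ne_zero]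
end

section
/- Let 0 < α < π, a = 1, b = cos(α/2), with AGM sequences a_n, b_n and limit μ. Then the relative error R₂ = (a₂ − μ)/a₂ satisfies 0 < R₂ < (1/(2⁶ cos(α/2)))·(sin(α/4) tan(α/4))⁴. -/
/-!
Write `d n = a n - b n`. Since `b (n + 1) ^ 2 = a n * b n`, the AGM satisfies
`8 * a (n + 2) * d (n + 1) = d n ^ 2`, so two steps give `d 2 = d 0 ^ 4 / (2 ^ 9 * a 2 ^ 2 * a 3)`.
The limit lies above the geometric mean `b 3 = √(a 2 * b 2)`, which bounds the relative error
`R₂` by `d 2 / (2 * a 3)`. Finally `d 0 = 2 sin² (α / 4)`, and `a 2 * a 3 > b 2 ^ 2` where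
`b 2 ^ 4 = a 1 ^ 2 * b 1 ^ 2 = cos⁴ (α / 4) * cos (α / 2)`.
-/

open Real Filter Topology

lemma sqrt_mul_lt_add_div_two {x y : ℝ} (hy : 0 ≤ y) (hyx : y < x) : √(x * y) < (x + y) / 2 := by
  rw [sqrt_lt' (by linarith)]
  nlinarith [sq_pos_of_pos (sub_pos.2 hyx)]

lemma sub_sqrt_mul_div_le {x y : ℝ} (hy : 0 < y) (hyx : y ≤ x) :
    (x - √(x * y)) / x ≤ (x - y) / (x + y) := by
  have hg : √(x * y) ^ 2 = x * y := sq_sqrt (by nlinarith)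
  have hgn := sqrt_nonneg (x * y)
  have amgm : 2 * √(x * y) ≤ x + y := by nlinarith [sq_nonneg (x - y)]
  rw [div_le_div_iff₀ (by linarith) (by linarith)]
  nlinarith [mul_nonneg hgn (sub_nonneg.2 amgm)]

def IsAGMSeq (a b : ℕ → ℝ) : Prop :=
  ∀ n, a (n + 1) = (a n + b n) / 2 ∧ b (n + 1) = √(a n * b n)

namespace IsAGMSeq

variable {a b : ℕ → ℝ} {μ : ℝ}

lemma sq_snd_succ (h : IsAGMSeq a b) {n : ℕ} (hn : 0 ≤ a n * b n) :
    b (n + 1) ^ 2 = a n * b n := by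
  rw [(h n).2, sq_sqrt hn]

lemma pos_and_lt (h : IsAGMSeq a b) (h0 : 0 < b 0) (h1 : b 0 < a 0) (n : ℕ) :
    0 < b n ∧ b n < a n := by
  induction n with
  | zero => exact ⟨h0, h1⟩
  | succ n ih =>
    obtain ⟨hb, hab⟩ := ih
    rw [(h n).1, (h n).2]
    exact ⟨sqrt_pos.2 (by nlinarith), sqrt_mul_lt_add_div_two hb.le hab⟩

lemma fst_pos (h : IsAGMSeq a b) (h0 : 0 < b 0) (h1 : b 0 < a 0) (n : ℕ) : 0 < a n :=
  (h.pos_and_lt h0 h1 n).1.trans (h.pos_and_lt h0 h1 n).2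

lemma mul_pos (h : IsAGMSeq a b) (h0 : 0 < b 0) (h1 : b 0 < a 0) (n : ℕ) : 0 < a n * b n :=
  _root_.mul_pos (h.fst_pos h0 h1 n) (h.pos_and_lt h0 h1 n).1

lemma strictAnti_fst (h : IsAGMSeq a b) (h0 : 0 < b 0) (h1 : b 0 < a 0) : StrictAnti a :=
  strictAnti_nat_of_succ_lt fun n => by
    have := (h.pos_and_lt h0 h1 n).2
    rw [(h n).1]
    linarith

lemma strictMono_snd (h : IsAGMSeq a b) (h0 : 0 < b 0) (h1 : b 0 < a 0) : StrictMono b :=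
  strictMono_nat_of_lt_succ fun n => by
    obtain ⟨hb, hab⟩ := h.pos_and_lt h0 h1 n
    rw [(h n).2, lt_sqrt hb.le]
    nlinarith

lemma snd_le_of_tendsto (h : IsAGMSeq a b) (h0 : 0 < b 0) (h1 : b 0 < a 0)
    (hμ : Tendsto b atTop (𝓝 μ)) (n : ℕ) : b n ≤ μ :=
  (h.strictMono_snd h0 h1).monotone.ge_of_tendsto hμ n

lemma lt_fst_of_tendsto (h : IsAGMSeq a b) (h0 : 0 < b 0) (h1 : b 0 < a 0)
    (hμ : Tendsto b atTop (𝓝 μ)) (n : ℕ) : μ < a n := by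
  have hle : μ ≤ a (n + 1) := le_of_tendsto hμ <| eventually_atTop.2
    ⟨n + 1, fun m hm => ((h.pos_and_lt h0 h1 m).2.le.trans ((h.strictAnti_fst h0 h1).antitone hm))⟩
  exact hle.trans_lt (h.strictAnti_fst h0 h1 n.lt_succ_self)

lemma rel_error_le (h : IsAGMSeq a b) (h0 : 0 < b 0) (h1 : b 0 < a 0)
    (hμ : Tendsto b atTop (𝓝 μ)) (n : ℕ) :
    (a n - μ) / a n ≤ (a n - b n) / (2 * a (n + 1)) := by
  obtain ⟨hb, hab⟩ := h.pos_and_lt h0 h1 n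
  have hg : √(a n * b n) ≤ μ := (h n).2 ▸ h.snd_le_of_tendsto h0 h1 hμ (n + 1)
  calc (a n - μ) / a n ≤ (a n - √(a n * b n)) / a n := by gcongr; linarith
    _ ≤ (a n - b n) / (a n + b n) := sub_sqrt_mul_div_le hb hab.le
    _ = (a n - b n) / (2 * a (n + 1)) := by rw [(h n).1]; ring

lemma eight_mul_sub_eq_sq (h : IsAGMSeq a b) {n : ℕ} (hn : 0 ≤ a n * b n) :
    8 * a (n + 2) * (a (n + 1) - b (n + 1)) = (a n - b n) ^ 2 := by
  rw [(h (n + 1)).1, (h n).1]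
  linear_combination (-4 : ℝ) * h.sq_snd_succ hn

lemma sub_add_two_div_eq_pow_four (h : IsAGMSeq a b) (h0 : 0 < b 0) (h1 : b 0 < a 0) (n : ℕ) :
    (a (n + 2) - b (n + 2)) / (2 * a (n + 3)) =
      (a n - b n) ^ 4 / (2 ^ 10 * (a (n + 2) * a (n + 3)) ^ 2) := by
  have e1 := h.eight_mul_sub_eq_sq (h.mul_pos h0 h1 n).le
  have e2 : 8 * a (n + 3) * (a (n + 2) - b (n + 2)) = (a (n + 1) - b (n + 1)) ^ 2 :=
    h.eight_mul_sub_eq_sq (h.mul_pos h0 h1 (n + 1)).le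
  have ha2 := h.fst_pos h0 h1 (n + 2)
  have ha3 := h.fst_pos h0 h1 (n + 3)
  rw [div_eq_div_iff (by positivity) (by positivity),
    show (a n - b n) ^ 4 = ((a n - b n) ^ 2) ^ 2 by ring, ← e1]
  linear_combination 128 * a (n + 2) ^ 2 * a (n + 3) * e2

lemma sq_snd_lt_fst_mul_fst_succ (h : IsAGMSeq a b) (h0 : 0 < b 0) (h1 : b 0 < a 0) (n : ℕ) :
    b n ^ 2 < a n * a (n + 1) := by
  obtain ⟨hb, hab⟩ := h.pos_and_lt h0 h1 n
  have hab' : b n < a (n + 1) :=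
    (h.strictMono_snd h0 h1 n.lt_succ_self).trans (h.pos_and_lt h0 h1 (n + 1)).2
  nlinarith

lemma snd_add_two_pow_four (h : IsAGMSeq a b) (h0 : 0 < b 0) (h1 : b 0 < a 0) (n : ℕ) :
    b (n + 2) ^ 4 = ((a n + b n) / 2) ^ 2 * (a n * b n) := by
  rw [show b (n + 2) ^ 4 = (b (n + 1 + 1) ^ 2) ^ 2 by ring, h.sq_snd_succ (h.mul_pos h0 h1 _).le,
    mul_pow, h.sq_snd_succ (h.mul_pos h0 h1 _).le, (h n).1]

end IsAGMSeq

lemma one_sub_cos_two_mul_pow_four_div (θ : ℝ) :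
    (1 - cos (2 * θ)) ^ 4 / (2 ^ 10 * (((1 + cos (2 * θ)) / 2) ^ 2 * cos (2 * θ))) =
      1 / (2 ^ 6 * cos (2 * θ)) * (sin θ * tan θ) ^ 4 := by
  have h1 : 1 - cos (2 * θ) = 2 * sin θ ^ 2 := by rw [cos_two_mul, cos_sq']; ring
  have h2 : (1 + cos (2 * θ)) / 2 = cos θ ^ 2 := by rw [cos_two_mul]; ring
  rw [h1, h2, tan_eq_sin_div_cos]
  ring

theorem ingham_R2_bound_general (α : ℝ) (hα0 : 0 < α) (hα : α < π)
    (A B : ℕ → ℝ) (hA0 : A 0 = 1) (hB0 : B 0 = Real.cos (α / 2))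
    (hA : ∀ n, A (n + 1) = (A n + B n) / 2)
    (hB : ∀ n, B (n + 1) = Real.sqrt (A n * B n))
    (μ : ℝ) (hμB : Tendsto B atTop (nhds μ)) :
    0 < (A 2 - μ) / A 2 ∧
    (A 2 - μ) / A 2 <
      (1 / (2 ^ 6 * Real.cos (α / 2))) * (Real.sin (α / 4) * Real.tan (α / 4)) ^ 4 := by
  have h : IsAGMSeq A B := fun n => ⟨hA n, hB n⟩
  have h0 : 0 < B 0 := hB0 ▸ cos_pos_of_mem_Ioo ⟨by linarith, by linarith⟩
  have h1 : B 0 < A 0 := by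
    rw [hA0, hB0, ← cos_zero]
    exact cos_lt_cos_of_nonneg_of_le_pi le_rfl (by linarith) (by linarith)
  obtain ⟨hB2, hBA2⟩ := h.pos_and_lt h0 h1 2
  refine ⟨div_pos (sub_pos.2 (h.lt_fst_of_tendsto h0 h1 hμB 2)) (hB2.trans hBA2), ?_⟩
  calc (A 2 - μ) / A 2 ≤ (A 2 - B 2) / (2 * A 3) := h.rel_error_le h0 h1 hμB 2
    _ = (A 0 - B 0) ^ 4 / (2 ^ 10 * (A 2 * A 3) ^ 2) := h.sub_add_two_div_eq_pow_four h0 h1 0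
    _ < (A 0 - B 0) ^ 4 / (2 ^ 10 * B 2 ^ 4) := by
      rw [show B 2 ^ 4 = (B 2 ^ 2) ^ 2 by ring]
      gcongr
      exact h.sq_snd_lt_fst_mul_fst_succ h0 h1 2
    _ = _ := by
      rw [h.snd_add_two_pow_four h0 h1 0, hA0, hB0, one_mul,
        show α / 2 = 2 * (α / 4) by ring]
      exact one_sub_cos_two_mul_pow_four_div _

theorem ingham_R2_bound (α : ℝ) (hα0 : 0 < α) (hα : α < π)
    (A B : ℕ → ℝ) (hA0 : A 0 = 1) (hB0 : B 0 = Real.cos (α / 2))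
    (hA : ∀ n, A (n + 1) = (A n + B n) / 2)
    (hB : ∀ n, B (n + 1) = Real.sqrt (A n * B n))
    (μ : ℝ) (hμA : Tendsto A atTop (nhds μ)) (hμB : Tendsto B atTop (nhds μ)) :
    0 < (A 2 - μ) / A 2 ∧
    (A 2 - μ) / A 2 <
      (1 / (2 ^ 6 * Real.cos (α / 2))) * (Real.sin (α / 4) * Real.tan (α / 4)) ^ 4 :=
  ingham_R2_bound_general α hα0 hα A B hA0 hB0 hA hB μ hμB
end

section
/- Let 0 < α < π, a = 1, b = cos(α/2), with AGM sequences a_n, b_n and limit μ. Then the relative error R₃ = (a₃ − μ)/a₃ satisfies 0 < R₃ < (1/(2¹⁴ cos²(α/2)))·(sin(α/4) tan(α/4))⁸. -/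
open Real Filter

/-!
Write `d n = a n - b n`. The AGM step gives `a (n+1)² - b (n+1)² = (d n / 2)²`, i.e.
`8 a (n+2) d (n+1) = d n ²`; iterated three times from `n = 0` it expresses `d 0 ^ 8` as
`2²¹ a₂⁴ a₃² a₄ d₃`. On the other side `μ ≥ b₄` and `d₄ = d₃² / (8 a₅)` with `a₅ > b₃` give
`R₃ < d₃ / (2 b₃)`, and bounding `b₃` and every `aₖ` from below by `b₂` compares the two. For `a₀ = 1`, `b₀ = cos(α/2)` one has
`b₂⁸ = cos⁸(α/4) cos²(α/2)` and `1 - cos(α/2) = 2 sin²(α/4)`.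
-/

structure IsAGMSeq_s17 (a b : ℕ → ℝ) : Prop where
  b_zero_pos : 0 < b 0
  b_zero_lt_a_zero : b 0 < a 0
  a_succ : ∀ n, a (n + 1) = (a n + b n) / 2
  b_succ : ∀ n, b (n + 1) = √(a n * b n)

namespace IsAGMSeq_s17

variable {a b : ℕ → ℝ} (h : IsAGMSeq_s17 a b)
include h

theorem b_pos_and_b_lt_a (n : ℕ) : 0 < b n ∧ b n < a n := by
  induction n with
  | zero => exact ⟨h.b_zero_pos, h.b_zero_lt_a_zero⟩
  | succ n ih =>
    obtain ⟨hb, hba⟩ := ih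
    rw [h.a_succ, h.b_succ]
    refine ⟨sqrt_pos.2 (by nlinarith), (sqrt_lt' (by linarith)).2 (by nlinarith)⟩

theorem b_pos (n : ℕ) : 0 < b n := (h.b_pos_and_b_lt_a n).1

theorem b_lt_a (n : ℕ) : b n < a n := (h.b_pos_and_b_lt_a n).2

theorem a_pos (n : ℕ) : 0 < a n := (h.b_pos n).trans (h.b_lt_a n)

theorem sq_b_succ (n : ℕ) : b (n + 1) ^ 2 = a n * b n := by
  rw [h.b_succ, sq_sqrt (mul_pos (h.a_pos n) (h.b_pos n)).le]

theorem strictAnti_a : StrictAnti a :=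
  strictAnti_nat_of_succ_lt fun n => by linarith [h.a_succ n, h.b_lt_a n]

theorem strictMono_b : StrictMono b :=
  strictMono_nat_of_lt_succ fun n => by
    nlinarith [h.sq_b_succ n, h.b_pos (n + 1), h.b_lt_a n]

theorem b_lt_a' (m n : ℕ) : b m < a n := by
  rcases le_total m n with hmn | hnm
  · exact (h.strictMono_b.monotone hmn).trans_lt (h.b_lt_a n)
  · exact (h.b_lt_a m).trans_le (h.strictAnti_a.antitone hnm)

theorem eight_mul_a_mul_sub (n : ℕ) :
    8 * a (n + 2) * (a (n + 1) - b (n + 1)) = (a n - b n) ^ 2 := by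
  rw [h.a_succ (n + 1), h.a_succ n]
  linear_combination (-4) * h.sq_b_succ n

theorem sub_pow_eight (n : ℕ) :
    (a n - b n) ^ 8
      = 2 ^ 21 * a (n + 2) ^ 4 * a (n + 3) ^ 2 * a (n + 4) * (a (n + 3) - b (n + 3)) := by
  have h₀ := h.eight_mul_a_mul_sub n
  have h₁ := h.eight_mul_a_mul_sub (n + 1)
  have h₂ := h.eight_mul_a_mul_sub (n + 2)
  calc (a n - b n) ^ 8 = (8 * a (n + 2) * (a (n + 1) - b (n + 1))) ^ 4 := by rw [h₀]; ring
    _ = 8 ^ 4 * a (n + 2) ^ 4 * (8 * a (n + 3) * (a (n + 2) - b (n + 2))) ^ 2 := by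
      rw [h₁]; ring
    _ = 8 ^ 6 * a (n + 2) ^ 4 * a (n + 3) ^ 2 * (8 * a (n + 4) * (a (n + 3) - b (n + 3))) := by
      rw [h₂]; ring
    _ = _ := by ring

theorem b_two_pow_eight : b 2 ^ 8 = ((a 0 + b 0) / 2) ^ 4 * (a 0 * b 0) ^ 2 := by
  calc b 2 ^ 8 = (b 2 ^ 2) ^ 4 := by ring
    _ = a 1 ^ 4 * (b 1 ^ 2) ^ 2 := by rw [h.sq_b_succ]; ring
    _ = _ := by rw [h.sq_b_succ, h.a_succ]

section Limit

variable {μ : ℝ} (hμ : Tendsto b atTop (nhds μ))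
include hμ

theorem lim_lt_a (n : ℕ) : μ < a n :=
  (le_of_tendsto' hμ fun m => (h.b_lt_a' m (n + 1)).le).trans_lt (h.strictAnti_a n.lt_succ_self)

theorem sub_lim_div_lt (n : ℕ) : (a n - μ) / a n < (a n - b n) / (2 * b n) := by
  have hb := h.b_pos n
  have hstep : a (n + 1) - b (n + 1) < (a n - b n) ^ 2 / (2 * b n) := by
    rw [lt_div_iff₀ (by positivity), ← h.eight_mul_a_mul_sub n, mul_comm]
    exact mul_lt_mul_of_pos_right (by linarith [h.b_lt_a' n (n + 2)])
      (sub_pos.2 (h.b_lt_a (n + 1)))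
  rw [div_lt_iff₀ (h.a_pos n)]
  calc a n - μ ≤ (a n - b n) / 2 + (a (n + 1) - b (n + 1)) := by
        linarith [h.a_succ n, h.strictMono_b.monotone.ge_of_tendsto hμ (n + 1)]
    _ < (a n - b n) / 2 + (a n - b n) ^ 2 / (2 * b n) := by gcongr
    _ = (a n - b n) / (2 * b n) * a n := by field_simp; ring

theorem sub_lim_div_lt_sub_pow_eight :
    (a 3 - μ) / a 3 < (a 0 - b 0) ^ 8 / (2 ^ 22 * b 2 ^ 8) := by
  have hd : 0 < a 3 - b 3 := sub_pos.2 (h.b_lt_a 3)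
  have hb₂ : 0 < b 2 := h.b_pos 2
  have hb₂_pow : b 2 ^ 8 ≤ a 2 ^ 4 * a 3 ^ 2 * a 4 * b 3 := by
    have := (h.b_lt_a' 2 2).le
    have := (h.b_lt_a' 2 3).le
    have := (h.b_lt_a' 2 4).le
    have := (h.strictMono_b (by norm_num : 2 < 3)).le
    calc b 2 ^ 8 = b 2 ^ 4 * b 2 ^ 2 * b 2 * b 2 := by ring
      _ ≤ a 2 ^ 4 * a 3 ^ 2 * a 4 * b 3 := by have := h.a_pos 4; gcongr
  calc (a 3 - μ) / a 3 < (a 3 - b 3) / (2 * b 3) := h.sub_lim_div_lt hμ 3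
    _ ≤ (a 3 - b 3) * (a 2 ^ 4 * a 3 ^ 2 * a 4) / (2 * b 2 ^ 8) := by
      rw [div_le_div_iff₀ (by linarith [h.b_pos 3]) (by positivity)]
      linarith [mul_le_mul_of_nonneg_left hb₂_pow hd.le]
    _ = _ := by rw [h.sub_pow_eight 0]; ring

end Limit

end IsAGMSeq_s17

theorem one_sub_cos_pow_eight_div_eq_sin_mul_tan_pow_eight (x : ℝ) :
    (1 - cos x) ^ 8 / (2 ^ 22 * (((1 + cos x) / 2) ^ 4 * cos x ^ 2))
      = 1 / (2 ^ 14 * cos x ^ 2) * (sin (x / 2) * tan (x / 2)) ^ 8 := by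
  have hcos : cos x = cos (x / 2) ^ 2 - sin (x / 2) ^ 2 := by
    rw [← cos_two_mul', mul_div_cancel₀ x two_ne_zero]
  have hsub : 1 - cos x = 2 * sin (x / 2) ^ 2 := by linarith [hcos, sin_sq_add_cos_sq (x / 2)]
  have hadd : 1 + cos x = 2 * cos (x / 2) ^ 2 := by linarith [hcos, sin_sq_add_cos_sq (x / 2)]
  rw [hsub, hadd, tan_eq_sin_div_cos]
  ring

theorem ingham_R3_bound_general (α : ℝ) (hα0 : 0 < α) (hα : α < π)
    (A B : ℕ → ℝ) (hA0 : A 0 = 1) (hB0 : B 0 = Real.cos (α / 2))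
    (hA : ∀ n, A (n + 1) = (A n + B n) / 2)
    (hB : ∀ n, B (n + 1) = Real.sqrt (A n * B n))
    (μ : ℝ) (hμB : Tendsto B atTop (nhds μ)) :
    0 < (A 3 - μ) / A 3 ∧
    (A 3 - μ) / A 3 <
      (1 / (2 ^ 14 * Real.cos (α / 2) ^ 2)) * (Real.sin (α / 4) * Real.tan (α / 4)) ^ 8 := by
  have hcos_pos : 0 < cos (α / 2) := cos_pos_of_mem_Ioo ⟨by linarith, by linarith⟩
  have hcos_lt : cos (α / 2) < 1 := by
    simpa using cos_lt_cos_of_nonneg_of_le_pi le_rfl (by linarith) (by linarith : 0 < α / 2)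
  have h : IsAGMSeq_s17 A B := ⟨hB0 ▸ hcos_pos, by rwa [hA0, hB0], hA, hB⟩
  refine ⟨div_pos (sub_pos.2 (h.lim_lt_a hμB 3)) (h.a_pos 3), ?_⟩
  calc (A 3 - μ) / A 3 < (A 0 - B 0) ^ 8 / (2 ^ 22 * B 2 ^ 8) :=
        h.sub_lim_div_lt_sub_pow_eight hμB
    _ = _ := by
      rw [h.b_two_pow_eight, hA0, hB0, one_mul,
        one_sub_cos_pow_eight_div_eq_sin_mul_tan_pow_eight, div_div]
      norm_num

theorem ingham_R3_bound (α : ℝ) (hα0 : 0 < α) (hα : α < π)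
    (A B : ℕ → ℝ) (hA0 : A 0 = 1) (hB0 : B 0 = Real.cos (α / 2))
    (hA : ∀ n, A (n + 1) = (A n + B n) / 2)
    (hB : ∀ n, B (n + 1) = Real.sqrt (A n * B n))
    (μ : ℝ) (hμA : Tendsto A atTop (nhds μ)) (hμB : Tendsto B atTop (nhds μ)) :
    0 < (A 3 - μ) / A 3 ∧
    (A 3 - μ) / A 3 <
      (1 / (2 ^ 14 * Real.cos (α / 2) ^ 2)) * (Real.sin (α / 4) * Real.tan (α / 4)) ^ 8 :=
  ingham_R3_bound_general α hα0 hα A B hA0 hB0 hA hB μ hμB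
end

section
/- For 0 < α < π, the complete elliptic integral satisfies K(sin(α/2)) = (1/cos²(α/4)) · K(tan²(α/4)). Consequently a pendulum of length l and maximum angular displacement α has the same period as a pendulum of length l/cos⁴(α/4) and maximum angular displacement α₁ = 2 arcsin(tan²(α/4)), and α₁ < α. -/
/-!
Write `I(a, b) = ∫₀^{π/2} dθ / √(a² cos²θ + b² sin²θ)`, so that `K(k) = I(1, √(1 - k²))`.
The substitution `x = b tan θ` turns `I(a, b)` into `∫₀^∞ dx / √((x² + a²)(x² + b²))`, and
Gauss's substitution `u = (x - ab/x)/2`, a bijection of `(0, ∞)` onto `ℝ`, shows that this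
integral is unchanged when `(a, b)` is replaced by its arithmetic and geometric means. With
`c = cos(α/2)` this gives `I(1, c) = I((1 + c)/2, √c)`, and rescaling the right-hand side by
`(1 + c)/2 = cos²(α/4)` yields Landen's transformation `K(sin(α/2)) = K(tan²(α/4)) / cos²(α/4)`.
The inequality `α₁ < α` reduces to `(1 - c)/(1 + c) < 1 - c ≤ √(1 - c²)`.
-/

open Real

open MeasureTheory Set

noncomputable def agmIntegral (a b : ℝ) : ℝ :=
  ∫ θ in Ioo 0 (π / 2), 1 / √(a ^ 2 * cos θ ^ 2 + b ^ 2 * sin θ ^ 2)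

noncomputable def agmIntegrand (a b x : ℝ) : ℝ :=
  1 / √((x ^ 2 + a ^ 2) * (x ^ 2 + b ^ 2))

noncomputable def agmIntegralIoi (a b : ℝ) : ℝ :=
  ∫ x in Ioi 0, agmIntegrand a b x

theorem agmIntegral_mul_mul (l a b : ℝ) :
    agmIntegral (l * a) (l * b) = |l|⁻¹ * agmIntegral a b := by
  rw [agmIntegral, agmIntegral, ← integral_const_mul]
  refine setIntegral_congr_fun measurableSet_Ioo fun θ _ => ?_
  rw [show (l * a) ^ 2 * cos θ ^ 2 + (l * b) ^ 2 * sin θ ^ 2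
      = l ^ 2 * (a ^ 2 * cos θ ^ 2 + b ^ 2 * sin θ ^ 2) by ring,
    sqrt_mul (sq_nonneg l), sqrt_sq_eq_abs, one_div, mul_inv, one_div]

theorem ellipticK_eq_agmIntegral {k : ℝ} (hk : k ^ 2 ≤ 1) :
    ellipticK k = agmIntegral 1 √(1 - k ^ 2) := by
  rw [ellipticK, agmIntegral, intervalIntegral.integral_of_le (by positivity),
    integral_Ioc_eq_integral_Ioo]
  refine setIntegral_congr_fun measurableSet_Ioo fun θ _ => ?_
  rw [sq_sqrt (by linarith)]
  congr 2
  linear_combination -sin_sq_add_cos_sq θ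

theorem agmIntegral_eq_agmIntegralIoi (a : ℝ) {b : ℝ} (hb : 0 < b) :
    agmIntegral a b = agmIntegralIoi a b := by
  have himg : (fun x => arctan (x / b)) '' Ioi 0 = Ioo 0 (π / 2) := by
    ext θ
    constructor
    · rintro ⟨x, hx, rfl⟩
      exact ⟨arctan_zero ▸ arctan_strictMono (div_pos hx hb), arctan_lt_pi_div_two _⟩
    · rintro ⟨h0, hπ⟩
      refine ⟨b * tan θ, mul_pos hb (tan_pos_of_pos_of_lt_pi_div_two h0 hπ), ?_⟩
      simp only [mul_div_cancel_left₀ _ hb.ne', arctan_tan (by linarith [pi_pos]) hπ]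
  have hderiv : ∀ x ∈ Ioi (0 : ℝ), HasDerivWithinAt (fun x => arctan (x / b))
      (1 / (1 + (x / b) ^ 2) * (1 / b)) (Ioi 0) x := by
    intro x _
    exact ((hasDerivAt_arctan (x / b)).comp x ((hasDerivAt_id x).div_const b)).hasDerivWithinAt
  have hinj : InjOn (fun x => arctan (x / b)) (Ioi 0) := fun x _ y _ h => by
    simpa [div_left_inj' hb.ne'] using arctan_injective h
  rw [agmIntegral, ← himg, integral_image_eq_integral_abs_deriv_smul measurableSet_Ioi hderiv
    hinj, agmIntegralIoi]
  refine setIntegral_congr_fun measurableSet_Ioi fun x (hx : 0 < x) => ?_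
  have hq : 0 < 1 + (x / b) ^ 2 := by positivity
  have hE : a ^ 2 * (1 / √(1 + (x / b) ^ 2)) ^ 2 + b ^ 2 * (x / b / √(1 + (x / b) ^ 2)) ^ 2
      = (x ^ 2 + a ^ 2) / (1 + (x / b) ^ 2) := by
    rw [one_div, inv_pow, div_pow (x / b), sq_sqrt hq.le]
    field_simp
    ring
  have hP : (x ^ 2 + a ^ 2) * (x ^ 2 + b ^ 2)
      = (b * (1 + (x / b) ^ 2)) ^ 2 * ((x ^ 2 + a ^ 2) / (1 + (x / b) ^ 2)) := by
    field_simp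
    ring
  have : 0 < √((x ^ 2 + a ^ 2) / (1 + (x / b) ^ 2)) := sqrt_pos.2 (by positivity)
  rw [cos_arctan, sin_arctan, hE, abs_of_pos (by positivity), smul_eq_mul, agmIntegrand, hP,
    sqrt_mul (sq_nonneg _), sqrt_sq (by positivity)]
  field_simp

theorem integral_agmIntegrand (a b : ℝ) : ∫ u, agmIntegrand a b u = 2 * agmIntegralIoi a b := by
  simpa only [agmIntegralIoi, agmIntegrand, sq_abs] using integral_comp_abs (f := agmIntegrand a b)

noncomputable def gaussMap (c x : ℝ) : ℝ := (x - c / x) / 2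

theorem hasDerivAt_gaussMap (c : ℝ) {x : ℝ} (hx : x ≠ 0) :
    HasDerivAt (gaussMap c) ((1 + c / x ^ 2) / 2) x := by
  have h : HasDerivAt (fun y => (y - c * y⁻¹) / 2) ((1 - c * -(x ^ 2)⁻¹) / 2) x :=
    ((hasDerivAt_id x).sub ((hasDerivAt_inv hx).const_mul c)).div_const 2
  convert h using 1
  · ext y
    rw [gaussMap, div_eq_mul_inv c]
  · ring

theorem strictMonoOn_gaussMap {c : ℝ} (hc : 0 ≤ c) : StrictMonoOn (gaussMap c) (Ioi 0) :=
  fun x (hx : 0 < x) y _ hxy => by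
    have : c / y ≤ c / x := div_le_div_of_nonneg_left hc hx hxy.le
    unfold gaussMap
    linarith

theorem gaussMap_image_Ioi {c : ℝ} (hc : 0 < c) : gaussMap c '' Ioi 0 = univ := by
  refine eq_univ_of_forall fun u => ?_
  have habs : |u| < √(u ^ 2 + c) := by
    rw [← sqrt_sq_eq_abs]
    exact sqrt_lt_sqrt (sq_nonneg u) (by linarith)
  have hx : 0 < u + √(u ^ 2 + c) := by linarith [neg_abs_le u]
  refine ⟨u + √(u ^ 2 + c), hx, ?_⟩
  have hs : √(u ^ 2 + c) ^ 2 = u ^ 2 + c := sq_sqrt (by positivity)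
  unfold gaussMap
  field_simp
  linear_combination hs

theorem deriv_mul_agmIntegrand_gaussMap {a b x : ℝ} (hab : 0 ≤ a * b) (hx : 0 < x) :
    (1 + a * b / x ^ 2) / 2 * agmIntegrand ((a + b) / 2) √(a * b) (gaussMap (a * b) x)
      = 2 * agmIntegrand a b x := by
  have hP : 0 < (x ^ 2 + a ^ 2) * (x ^ 2 + b ^ 2) := by positivity
  have hfactor : (gaussMap (a * b) x ^ 2 + ((a + b) / 2) ^ 2) *
      (gaussMap (a * b) x ^ 2 + √(a * b) ^ 2)
      = ((x ^ 2 + a * b) / (4 * x ^ 2)) ^ 2 * ((x ^ 2 + a ^ 2) * (x ^ 2 + b ^ 2)) := by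
    rw [sq_sqrt hab, gaussMap]
    field_simp
    ring
  have : 0 < √((x ^ 2 + a ^ 2) * (x ^ 2 + b ^ 2)) := sqrt_pos.2 hP
  rw [agmIntegrand, agmIntegrand, hfactor, sqrt_mul (sq_nonneg _), sqrt_sq (by positivity)]
  field_simp
  ring

theorem agmIntegralIoi_eq_agmIntegralIoi_mean {a b : ℝ} (hab : 0 < a * b) :
    agmIntegralIoi a b = agmIntegralIoi ((a + b) / 2) √(a * b) := by
  have hsubst := integral_image_eq_integral_abs_deriv_smul measurableSet_Ioi
    (fun x (hx : 0 < x) => (hasDerivAt_gaussMap (a * b) hx.ne').hasDerivWithinAt)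
    (strictMonoOn_gaussMap hab.le).injOn (agmIntegrand ((a + b) / 2) √(a * b))
  rw [gaussMap_image_Ioi hab, Measure.restrict_univ, integral_agmIntegrand] at hsubst
  suffices 2 * agmIntegralIoi ((a + b) / 2) √(a * b) = 2 * agmIntegralIoi a b by linarith
  rw [hsubst, agmIntegralIoi, ← integral_const_mul]
  refine setIntegral_congr_fun measurableSet_Ioi fun x (hx : 0 < x) => ?_
  rw [abs_of_pos (by positivity), smul_eq_mul, deriv_mul_agmIntegrand_gaussMap hab.le hx]

theorem agmIntegral_eq_agmIntegral_mean {a b : ℝ} (ha : 0 < a) (hb : 0 < b) :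
    agmIntegral a b = agmIntegral ((a + b) / 2) √(a * b) := by
  rw [agmIntegral_eq_agmIntegralIoi a hb, agmIntegral_eq_agmIntegralIoi _ (by positivity),
    agmIntegralIoi_eq_agmIntegralIoi_mean (mul_pos ha hb)]

theorem ellipticK_landen {c : ℝ} (hc0 : 0 < c) (hc1 : c ≤ 1) :
    ellipticK √(1 - c ^ 2) = 2 / (1 + c) * ellipticK ((1 - c) / (1 + c)) := by
  have hk : ((1 - c) / (1 + c)) ^ 2 ≤ 1 := by
    rw [div_pow, div_le_one (by positivity)]
    nlinarith
  have hk' : 1 - ((1 - c) / (1 + c)) ^ 2 = (2 * √c / (1 + c)) ^ 2 := by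
    rw [div_pow, div_pow, mul_pow, sq_sqrt hc0.le]
    field_simp
    ring
  have hscale := agmIntegral_mul_mul ((1 + c) / 2) 1 (2 * √c / (1 + c))
  rw [mul_one, abs_of_pos (by positivity), inv_div,
    show (1 + c) / 2 * (2 * √c / (1 + c)) = √c by field_simp] at hscale
  rw [ellipticK_eq_agmIntegral (by rw [sq_sqrt] <;> nlinarith),
    ellipticK_eq_agmIntegral hk, sq_sqrt (by nlinarith), sub_sub_cancel, sqrt_sq hc0.le, hk',
    sqrt_sq (by positivity), agmIntegral_eq_agmIntegral_mean one_pos hc0, one_mul, hscale]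

theorem landen_modulus_lt_sqrt {c : ℝ} (hc0 : 0 < c) (hc1 : c < 1) :
    (1 - c) / (1 + c) < √(1 - c ^ 2) :=
  calc (1 - c) / (1 + c) < 1 - c := div_lt_self (by linarith) (by linarith)
    _ = √((1 - c) ^ 2) := (sqrt_sq (by linarith)).symm
    _ ≤ √(1 - c ^ 2) := sqrt_le_sqrt (by nlinarith)

theorem cos_sq_half (x : ℝ) : cos (x / 2) ^ 2 = (1 + cos x) / 2 := by
  rw [cos_sq, mul_div_cancel₀ x two_ne_zero]
  ring

theorem tan_sq_half (x : ℝ) : tan (x / 2) ^ 2 = (1 - cos x) / (1 + cos x) := by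
  rw [tan_eq_sin_div_cos, div_pow, sin_sq, cos_sq_half,
    show 1 - (1 + cos x) / 2 = (1 - cos x) / 2 by ring, div_div_div_cancel_right₀ two_ne_zero]

theorem pendulum_renormalization (α : ℝ) (hα0 : 0 < α) (hα : α < π) :
    ellipticK (Real.sin (α / 2)) =
      (1 / Real.cos (α / 4) ^ 2) * ellipticK (Real.tan (α / 4) ^ 2) ∧
    2 * Real.arcsin (Real.tan (α / 4) ^ 2) < α := by
  have hquarter : α / 4 = α / 2 / 2 := by ring
  set c := cos (α / 2)
  have hc0 : 0 < c := cos_pos_of_mem_Ioo ⟨by linarith, by linarith⟩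
  have hc1 : c < 1 := by
    simpa using cos_lt_cos_of_nonneg_of_le_pi le_rfl (by linarith) (by linarith : 0 < α / 2)
  have hsin : sin (α / 2) = √(1 - c ^ 2) :=
    sin_eq_sqrt_one_sub_cos_sq (by linarith) (by linarith)
  have hcos : cos (α / 4) ^ 2 = (1 + c) / 2 := by rw [hquarter, cos_sq_half]
  have htan : tan (α / 4) ^ 2 = (1 - c) / (1 + c) := by rw [hquarter, tan_sq_half]
  refine ⟨?_, ?_⟩
  · rw [hsin, htan, hcos, one_div_div, ellipticK_landen hc0 hc1.le]
  · rw [← lt_div_iff₀' two_pos, arcsin_lt_iff_lt_sin' ⟨by linarith, by linarith⟩, hsin, htan]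
    exact landen_modulus_lt_sqrt hc0 hc1
end
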